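/- arXiv:2302.13026 — 2 statements merged into one kernel-verified Lean document; each statement's English description precedes it below -/
import Mathlib

section
/- If q1 and q2 are no-rollback walks from u to v in a simple graph G and q1 ≃ q2, then q1 = q2. (Uniqueness part of the paper's Theorem 1: each homotopy class of walks contains at most one no-rollback walk.) -/
/-!
Cancelling backtracks from the left defines a reduction `Walk.reduce` onto no-rollback walks,
in the manner of free reduction of words in a free group. Prepending an edge `x → y` and then
its reverse to a no-rollback walk starting at `x` gives that walk back, so reduction cannot see
a single move; hence homotopic walks have the same reduction, and a no-rollback walk is its own
reduction.
-/

open SimpleGraph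

variable {V : Type*}

/-- One-step move on walks: insert or delete a backtrack `x, y, x`
(with `y` adjacent to `x`) at some position of the walk. -/
inductive Move (G : SimpleGraph V) : ∀ {u v : V}, G.Walk u v → G.Walk u v → Prop
  | insert {u v x y : V} (p : G.Walk u x) (q : G.Walk x v) (h : G.Adj x y) :
      Move G (p.append q) (p.append (Walk.cons h (Walk.cons h.symm q)))
  | delete {u v x y : V} (p : G.Walk u x) (q : G.Walk x v) (h : G.Adj x y) :
      Move G (p.append (Walk.cons h (Walk.cons h.symm q))) (p.append q)

/-- Two walks with the same endpoints are homotopic if one can be obtained from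
the other by a finite sequence of one-step moves. -/
def Homotopic (G : SimpleGraph V) {u v : V} (p q : G.Walk u v) : Prop :=
  Relation.ReflTransGen (fun a b : G.Walk u v => Move G a b) p q

/-- A walk is a no-rollback walk if its vertex sequence contains no segment of
the form `x, y, x`, i.e. there is no index `i` at which the `i`-th and
`(i+2)`-th vertices of the walk coincide. -/
def NoRollback {G : SimpleGraph V} {u v : V} (p : G.Walk u v) : Prop :=
  ∀ (i : ℕ) (h : i + 2 < p.support.length),
    p.support[i]'(by omega) ≠ p.support[i + 2]'h

variable {G : SimpleGraph V}

lemma noRollback_iff_getVert_ne {u v : V} (p : G.Walk u v) :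
    NoRollback p ↔ ∀ i, i + 2 ≤ p.length → p.getVert i ≠ p.getVert (i + 2) := by
  refine forall_congr' fun i => ?_
  simp only [Walk.length_support, Walk.support_getElem_eq_getVert]
  exact ⟨fun h hi => h (by omega), fun h hi => h (by omega)⟩

lemma noRollback_cons_iff {u w v : V} (h : G.Adj u w) (p : G.Walk w v) :
    NoRollback (Walk.cons h p) ↔ u ≠ p.getVert 1 ∧ NoRollback p := by
  simp only [noRollback_iff_getVert_ne, Walk.length_cons]
  constructor
  · intro hp
    refine ⟨?_, fun i hi => by simpa using hp (i + 1) (by omega)⟩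
    rcases p.length.eq_zero_or_pos with hl | hl
    · rw [Walk.getVert_of_length_le p (by omega)]
      rw [Walk.eq_of_length_eq_zero hl] at h
      exact h.ne
    · simpa using hp 0 (by omega)
  · rintro ⟨hu, hp⟩ (_ | i) hi
    · simpa using hu
    · simpa using hp i (by omega)

namespace SimpleGraph.Walk

noncomputable def reduceCons {u w v : V} (h : G.Adj u w) : G.Walk w v → G.Walk u v
  | nil => cons h nil
  | @cons _ _ _ x _ h' r =>
      letI := Classical.decEq V
      if hx : x = u then r.copy hx rfl else cons h (cons h' r)

@[simp]
lemma reduceCons_nil {u w : V} (h : G.Adj u w) : reduceCons h (nil : G.Walk w w) = cons h nil :=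
  rfl

@[simp]
lemma reduceCons_cons_self {u w v : V} (h : G.Adj u w) (h' : G.Adj w u) (r : G.Walk u v) :
    reduceCons h (cons h' r) = r := by
  simp [reduceCons]

lemma reduceCons_cons_of_ne {u w x v : V} (h : G.Adj u w) (h' : G.Adj w x) (r : G.Walk x v)
    (hx : x ≠ u) : reduceCons h (cons h' r) = cons h (cons h' r) := by
  simp [reduceCons, hx]

lemma reduceCons_of_ne_getVert_one {u w v : V} (h : G.Adj u w) (r : G.Walk w v)
    (hu : u ≠ r.getVert 1) : reduceCons h r = cons h r := by
  cases r with
  | nil => rfl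
  | cons h' r => exact reduceCons_cons_of_ne h h' r (by simpa [eq_comm] using hu)

lemma noRollback_reduceCons {u w v : V} (h : G.Adj u w) {r : G.Walk w v} (hr : NoRollback r) :
    NoRollback (reduceCons h r) := by
  cases r with
  | nil => simp [noRollback_iff_getVert_ne]
  | @cons _ x _ h' r =>
    by_cases hx : x = u
    · subst hx
      simpa using ((noRollback_cons_iff h' r).mp hr).2
    · rw [reduceCons_cons_of_ne h h' r hx, noRollback_cons_iff]
      exact ⟨by simpa [eq_comm] using hx, hr⟩

lemma reduceCons_reduceCons_symm {x y v : V} (h : G.Adj x y) {r : G.Walk x v}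
    (hr : NoRollback r) : reduceCons h (reduceCons h.symm r) = r := by
  cases r with
  | nil => simp
  | @cons _ z _ h' r =>
    by_cases hz : z = y
    · subst hz
      rw [reduceCons_cons_self,
        reduceCons_of_ne_getVert_one h r ((noRollback_cons_iff h' r).mp hr).1]
    · rw [reduceCons_cons_of_ne h.symm h' r hz, reduceCons_cons_self]

noncomputable def reduce {u v : V} : G.Walk u v → G.Walk u v
  | nil => nil
  | cons h p => reduceCons h p.reduce

lemma noRollback_reduce {u v : V} (p : G.Walk u v) : NoRollback p.reduce := by
  induction p with
  | nil => simp [reduce, noRollback_iff_getVert_ne]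
  | cons h p ih => exact noRollback_reduceCons h ih

lemma reduce_eq_self_of_noRollback {u v : V} {p : G.Walk u v} (hp : NoRollback p) :
    p.reduce = p := by
  induction p with
  | nil => rfl
  | cons h p ih =>
    rw [noRollback_cons_iff] at hp
    rw [reduce, ih hp.2, reduceCons_of_ne_getVert_one h p hp.1]

lemma reduce_append_cons_cons_symm {u x y v : V} (p : G.Walk u x) (q : G.Walk x v)
    (h : G.Adj x y) : (p.append (cons h (cons h.symm q))).reduce = (p.append q).reduce := by
  induction p with
  | nil => exact reduceCons_reduceCons_symm h (noRollback_reduce q)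
  | cons h' p ih => simp only [cons_append, reduce, ih]

end SimpleGraph.Walk

lemma Move.reduce_eq {u v : V} {p q : G.Walk u v} (hm : Move G p q) : p.reduce = q.reduce := by
  cases hm with
  | insert p q h => exact (Walk.reduce_append_cons_cons_symm p q h).symm
  | delete p q h => exact Walk.reduce_append_cons_cons_symm p q h

lemma Homotopic.reduce_eq {u v : V} {p q : G.Walk u v} (hpq : Homotopic G p q) :
    p.reduce = q.reduce := by
  induction hpq with
  | refl => rfl
  | tail _ hm ih => exact ih.trans hm.reduce_eq

/-- Theorem 1 (uniqueness): each homotopy class contains at most one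
no-rollback walk. -/
theorem noRollback_homotopic_unique (G : SimpleGraph V) (u v : V)
    (q1 q2 : G.Walk u v) (h1 : NoRollback q1) (h2 : NoRollback q2)
    (h : Homotopic G q1 q2) : q1 = q2 := by
  rw [← Walk.reduce_eq_self_of_noRollback h1, ← Walk.reduce_eq_self_of_noRollback h2]
  exact h.reduce_eq
end

section
/- For every walk p from u to v in a simple graph G, the no-rollback walk homotopic to p is the shortest walk in the homotopy class of p: if q is a no-rollback walk with p ≃ q, then for every walk r from u to v with r ≃ p, the length (number of edges) of q is at most the length of r. (The combinatorial content of the paper's Theorem 7: the encoding of a locally optimal path is the no-rollback representative of its class.) -/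
open SimpleGraph

variable {V : Type*}

namespace NRaux

/-- Encode a walk as a word over `(V × V) × Bool`: each edge step `a → b`
contributes the two letters `((a,b), true)` and `((b,a), false)`. -/
def word {G : SimpleGraph V} : ∀ {u v : V}, G.Walk u v → List ((V × V) × Bool)
  | _, _, Walk.nil => []
  | _, _, @Walk.cons _ _ a b _ _ p => ((a, b), true) :: ((b, a), false) :: word p

theorem word_length {G : SimpleGraph V} {u v : V} (p : G.Walk u v) :
    (word p).length = 2 * p.length := by
  induction p with
  | nil => rfl
  | cons h p ih => simp [word, ih, Walk.length_cons]; omega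

theorem word_append {G : SimpleGraph V} {u v w : V} (p : G.Walk u v) (q : G.Walk v w) :
    word (p.append q) = word p ++ word q := by
  induction p with
  | nil => rfl
  | cons h p ih => simp [word, Walk.cons_append, ih]

theorem red_of_insert {G : SimpleGraph V} {u v x y : V} (p : G.Walk u x) (q : G.Walk x v)
    (h : G.Adj x y) :
    FreeGroup.Red (word (p.append (Walk.cons h (Walk.cons h.symm q)))) (word (p.append q)) := by
  rw [word_append, word_append]
  show FreeGroup.Red (word p ++ (((x,y),true) :: ((y,x),false) :: ((y,x),true) :: ((x,y),false)
      :: word q)) (word p ++ word q)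
  refine Relation.ReflTransGen.head
    (b := word p ++ ((x,y),true) :: ((x,y),false) :: word q) ?_ (Relation.ReflTransGen.single ?_)
  · have : FreeGroup.Red.Step ((word p ++ [((x,y),true)]) ++ ((y,x),false) :: ((y,x),!false)
        :: (((x,y),false) :: word q)) ((word p ++ [((x,y),true)]) ++ (((x,y),false) :: word q)) :=
      FreeGroup.Red.Step.not
    simpa using this
  · have : FreeGroup.Red.Step (word p ++ ((x,y),true) :: ((x,y),!true) :: word q)
        (word p ++ word q) := FreeGroup.Red.Step.not
    simpa using this

theorem mk_eq_of_move {G : SimpleGraph V} {u v : V} {a b : G.Walk u v} (m : Move G a b) :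
    FreeGroup.mk (word a) = FreeGroup.mk (word b) := by
  cases m with
  | insert p q h =>
      exact (FreeGroup.Red.exact.2 ⟨word (p.append q), Relation.ReflTransGen.refl,
        red_of_insert p q h⟩)
  | delete p q h =>
      exact (FreeGroup.Red.exact.2 ⟨word (p.append q), red_of_insert p q h,
        Relation.ReflTransGen.refl⟩)

theorem mk_eq_of_homotopic {G : SimpleGraph V} {u v : V} {a b : G.Walk u v}
    (hpq : Homotopic G a b) : FreeGroup.mk (word a) = FreeGroup.mk (word b) := by
  induction hpq with
  | refl => rfl
  | tail _ m ih => exact ih.trans (mk_eq_of_move m)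

/-- The no-cancellation relation on adjacent letters. -/
def R : (V × V) × Bool → (V × V) × Bool → Prop :=
  fun l₁ l₂ => ¬(l₁.1 = l₂.1 ∧ l₂.2 = !l₁.2)

theorem noRollback_tail {G : SimpleGraph V} {u w v : V} {h : G.Adj u w} {p : G.Walk w v}
    (hnr : NoRollback (Walk.cons h p)) : NoRollback p := by
  intro i hi
  have hi' : i + 1 + 2 < (Walk.cons h p).support.length := by
    simp only [Walk.support_cons, List.length_cons]
    omega
  have := hnr (i + 1) hi'
  simpa [Walk.support_cons] using this

theorem chain'_word {G : SimpleGraph V} {u v : V} (p : G.Walk u v) (hnr : NoRollback p) :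
    List.Chain' R (word p) := by
  induction p with
  | nil => exact List.isChain_nil
  | @cons a b _ h p ih =>
    have hab : a ≠ b := h.ne
    have htail := ih (noRollback_tail hnr)
    refine List.isChain_cons_cons.2 ⟨?_, ?_⟩
    · intro ⟨h1, _⟩
      exact hab (congrArg Prod.fst h1)
    · refine (List.isChain_cons).2 ⟨?_, htail⟩
      intro y hy
      cases p with
      | nil => simp [word] at hy
      | @cons b c _ h' p' =>
        have hy' : ((b, c), true) = y := by simpa [word] using hy
        subst hy'
        intro ⟨h1, _⟩
        have hac : a = c := congrArg Prod.snd h1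
        have hlen : 0 + 2 < (Walk.cons h (Walk.cons h' p')).support.length := by
          simp [Walk.support_cons]
        have h0 : p'.support = c :: p'.support.tail := p'.support_eq_cons
        have hsup : (Walk.cons h (Walk.cons h' p')).support = a :: b :: c :: p'.support.tail := by
          rw [Walk.support_cons, Walk.support_cons, h0]
          rfl
        have h2 := hnr 0 hlen
        simp only [hsup, List.getElem_cons_zero, List.getElem_cons_succ] at h2
        exact h2 hac

theorem no_step_of_chain' {L : List ((V × V) × Bool)} (hc : List.Chain' R L) :
    ∀ L', ¬ FreeGroup.Red.Step L L' := by
  intro L' hs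
  cases hs with
  | @not L₁ L₂ x b =>
    have h2 := (List.isChain_append.1 hc).2.1
    have := (List.isChain_cons_cons.1 h2).1
    exact this ⟨rfl, rfl⟩

theorem red_eq_of_reduced {L L' : List ((V × V) × Bool)} (hc : List.Chain' R L)
    (h : FreeGroup.Red L L') : L' = L := by
  induction h using Relation.ReflTransGen.head_induction_on with
  | refl => rfl
  | head hstep _ _ => exact absurd hstep (no_step_of_chain' hc _)

end NRaux

/-- Theorem 7 (combinatorial content): the no-rollback walk homotopic to `p`
is the shortest walk in the homotopy class of `p`. -/
theorem noRollback_length_min (G : SimpleGraph V) (u v : V)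
    (p q : G.Walk u v) (hq : NoRollback q) (hpq : Homotopic G p q) :
    ∀ r : G.Walk u v, Homotopic G r p → q.length ≤ r.length := by
  intro r hrp
  have hmk : FreeGroup.mk (NRaux.word r) = FreeGroup.mk (NRaux.word q) :=
    (NRaux.mk_eq_of_homotopic hrp).trans (NRaux.mk_eq_of_homotopic hpq)
  obtain ⟨L, hqL, hrL⟩ := FreeGroup.Red.exact.1 hmk.symm
  have hc := NRaux.chain'_word q hq
  have hLq : L = NRaux.word q := NRaux.red_eq_of_reduced hc hqL
  subst hLq
  have hlen := FreeGroup.Red.length_le hrL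
  rw [NRaux.word_length, NRaux.word_length] at hlen
  omega
end
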